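/- arXiv:2401.04115 — 3 statements merged into one kernel-verified Lean document; each statement's English description precedes it below -/
import Mathlib

section
/- Let W(r) = (1 + r²/8)^{-1} and ΛW(r) = (1 - r²/8)(1 + r²/8)^{-2} (dimension D = 4). Then ∫₀^∞ [(r ∂_r ΛW)(r) + 2 ΛW(r)] · ΛW(r) · r³ dr = 32. -/
open MeasureTheory Set Filter Topology

/-!
On the half-line, `(r f' + (n+1)/2 f) f rⁿ` is the derivative of `r^(n+1) f² / 2`: the radial
`L²(ℝⁿ⁺¹)` pairing of the scaling generator with `f` is a boundary term. For `n = 3` and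
`f = ΛW` it vanishes at `0`, and since `r² ΛW(r) → -8` it equals `64 / 2` at infinity.
-/

theorem hasDerivAt_pow_succ_mul_sq_div_two {f : ℝ → ℝ} {f' r : ℝ} (n : ℕ)
    (hf : HasDerivAt f f' r) :
    HasDerivAt (fun r => r ^ (n + 1) * f r ^ 2 / 2)
      ((r * f' + (n + 1) / 2 * f r) * f r * r ^ n) r := by
  refine (((hasDerivAt_pow (n + 1) r).mul (hf.pow 2)).div_const 2).congr_deriv ?_
  simp only [Pi.pow_apply, add_tsub_cancel_right]
  push_cast
  ring

theorem integral_Ioi_scalingGenerator_mul_self {f f' : ℝ → ℝ} {L : ℝ} (n : ℕ)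
    (hf : ∀ r ∈ Ici (0 : ℝ), HasDerivAt f (f' r) r)
    (hint : IntegrableOn (fun r => (r * f' r + (n + 1) / 2 * f r) * f r * r ^ n) (Ioi 0))
    (hlim : Tendsto (fun r => r ^ (n + 1) * f r ^ 2) atTop (𝓝 L)) :
    ∫ r in Ioi 0, (r * f' r + (n + 1) / 2 * f r) * f r * r ^ n = L / 2 := by
  rw [integral_Ioi_of_hasDerivAt_of_tendsto'
    (fun r hr => hasDerivAt_pow_succ_mul_sq_div_two n (hf r hr)) hint (hlim.div_const 2)]
  simp

noncomputable def lambdaW (r : ℝ) : ℝ := (1 - r ^ 2 / 8) * ((1 + r ^ 2 / 8) ^ 2)⁻¹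

theorem hasDerivAt_lambdaW (r : ℝ) :
    HasDerivAt lambdaW (r / 4 * (r ^ 2 / 8 - 3) * ((1 + r ^ 2 / 8) ^ 3)⁻¹) r := by
  have hnum : HasDerivAt (fun r : ℝ => 1 - r ^ 2 / 8) (-(r / 4)) r :=
    (((hasDerivAt_pow 2 r).div_const 8).const_sub 1).congr_deriv (by ring)
  have hden : HasDerivAt (fun r : ℝ => (1 + r ^ 2 / 8) ^ 2) ((1 + r ^ 2 / 8) * (r / 2)) r :=
    ((((hasDerivAt_pow 2 r).div_const 8).const_add 1).pow 2).congr_deriv (by push_cast; ring)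
  refine (hnum.mul (hden.inv (by positivity))).congr_deriv ?_
  simp only [Pi.inv_apply]
  field_simp
  ring

theorem scalingGenerator_lambdaW_mul_lambdaW (r : ℝ) :
    (r * deriv lambdaW r + 2 * lambdaW r) * lambdaW r * r ^ 3 =
      2 * (1 - 3 * r ^ 2 / 8) * (1 - r ^ 2 / 8) * r ^ 3 / (1 + r ^ 2 / 8) ^ 5 := by
  rw [(hasDerivAt_lambdaW r).deriv, lambdaW]
  field_simp
  ring

theorem pow_three_mul_one_add_sq_le {t : ℝ} (ht : 0 ≤ t) :
    t ^ 3 * (1 + t ^ 2) ≤ 512 * (1 + t ^ 2 / 8) ^ 3 := by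
  nlinarith [mul_nonneg ht (sq_nonneg (t - 1)), sq_nonneg (t ^ 2 - t), pow_nonneg ht 3,
    pow_nonneg ht 4, pow_nonneg ht 5]

theorem abs_scalingGenerator_lambdaW_mul_lambdaW_le (r : ℝ) :
    |(r * deriv lambdaW r + 2 * lambdaW r) * lambdaW r * r ^ 3| ≤ 3072 * (1 + r ^ 2)⁻¹ := by
  have hnum : |2 * (1 - 3 * r ^ 2 / 8) * (1 - r ^ 2 / 8)| ≤ 6 * (1 + r ^ 2 / 8) ^ 2 :=
    abs_le.2 ⟨by nlinarith [sq_nonneg r, sq_nonneg (r ^ 2)],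
      by nlinarith [sq_nonneg r, sq_nonneg (r ^ 2)]⟩
  have hcube : |r| ^ 3 * (1 + r ^ 2) ≤ 512 * (1 + r ^ 2 / 8) ^ 3 := by
    simpa only [sq_abs] using pow_three_mul_one_add_sq_le (abs_nonneg r)
  rw [scalingGenerator_lambdaW_mul_lambdaW, abs_div,
    abs_of_pos (by positivity : (0 : ℝ) < (1 + r ^ 2 / 8) ^ 5), div_le_iff₀ (by positivity), ← div_eq_mul_inv, div_mul_eq_mul_div, le_div_iff₀ (by positivity),
    abs_mul, abs_pow, mul_assoc]
  calc |2 * (1 - 3 * r ^ 2 / 8) * (1 - r ^ 2 / 8)| * (|r| ^ 3 * (1 + r ^ 2))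
      ≤ 6 * (1 + r ^ 2 / 8) ^ 2 * (512 * (1 + r ^ 2 / 8) ^ 3) :=
        mul_le_mul hnum hcube (by positivity) (by positivity)
    _ = 3072 * (1 + r ^ 2 / 8) ^ 5 := by ring

theorem integrableOn_scalingGenerator_lambdaW_mul_lambdaW :
    IntegrableOn (fun r => (r * deriv lambdaW r + 2 * lambdaW r) * lambdaW r * r ^ 3) (Ioi 0) := by
  refine (Integrable.mono' (integrable_inv_one_add_sq.const_mul 3072) ?_
    (Eventually.of_forall abs_scalingGenerator_lambdaW_mul_lambdaW_le)).integrableOn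
  rw [funext scalingGenerator_lambdaW_mul_lambdaW]
  exact Continuous.aestronglyMeasurable (by fun_prop (disch := intro; positivity))

theorem tendsto_sq_mul_lambdaW : Tendsto (fun r => r ^ 2 * lambdaW r) atTop (𝓝 (-8)) := by
  -- `r² ΛW(r) = (u - 1/8) / (u + 1/8)²` with `u = r⁻²`
  have hcont : ContinuousAt (fun u : ℝ => (u - 1 / 8) / (u + 1 / 8) ^ 2) 0 := by
    fun_prop (disch := norm_num)
  have hlim := hcont.tendsto.comp (tendsto_inv_atTop_zero.comp (tendsto_pow_atTop two_ne_zero))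
  norm_num at hlim
  refine hlim.congr' ?_
  filter_upwards [eventually_ne_atTop 0] with r hr
  simp only [Function.comp_apply, lambdaW]
  field_simp

theorem tendsto_pow_four_mul_lambdaW_sq :
    Tendsto (fun r => r ^ 4 * lambdaW r ^ 2) atTop (𝓝 64) := by
  convert tendsto_sq_mul_lambdaW.pow 2 using 2 <;> ring

theorem stmt6 (ΛW : ℝ → ℝ)
    (hΛW : ∀ r : ℝ, ΛW r = (1 - r ^ 2 / 8) * ((1 + r ^ 2 / 8) ^ 2)⁻¹) :
    ∫ r in Set.Ioi (0 : ℝ), (r * deriv ΛW r + 2 * ΛW r) * ΛW r * r ^ 3 = 32 := by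
  obtain rfl : ΛW = lambdaW := funext hΛW
  have h := integral_Ioi_scalingGenerator_mul_self 3
    (fun r _ => (hasDerivAt_lambdaW r).differentiableAt.hasDerivAt)
    (by norm_num [integrableOn_scalingGenerator_lambdaW_mul_lambdaW])
    tendsto_pow_four_mul_lambdaW_sq
  norm_num at h
  exact h
end

section
/- Let D ≥ 5 and ΛW(r) = ((D-2)/D - r²/(2D))(1 + r²/(D(D-2)))^{-D/2}. Then there exists a constant C = C(D) such that for all σ ∈ (0,1], |∫₀^∞ σ^{-D/2} ΛW(r/σ) · ΛW(r) · r^{D-1} dr| ≤ C σ^{(D-4)/2}. -/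
open MeasureTheory

set_option maxHeartbeats 1600000 in
theorem stmt7 (D : ℕ) (hD : 5 ≤ D) (ΛW : ℝ → ℝ)
    (hΛW : ∀ r : ℝ, ΛW r = (((D : ℝ) - 2) / (D : ℝ) - r ^ 2 / (2 * (D : ℝ))) *
        (1 + r ^ 2 / ((D : ℝ) * ((D : ℝ) - 2))) ^ (-((D : ℝ) / 2))) :
    ∃ C : ℝ, ∀ σ ∈ Set.Ioc (0 : ℝ) 1,
      |∫ r in Set.Ioi (0 : ℝ), σ ^ (-((D : ℝ) / 2)) * ΛW (r / σ) * ΛW r * r ^ (D - 1)|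
        ≤ C * σ ^ (((D : ℝ) - 4) / 2) := by
  set d : ℝ := (D : ℝ) with hd_def
  have hd : (5 : ℝ) ≤ d := by rw [hd_def]; exact_mod_cast hD
  set a : ℝ := d * (d - 2) with ha_def
  have ha1 : (1 : ℝ) ≤ a := by nlinarith
  have ha0 : (0 : ℝ) < a := by linarith
  set K : ℝ := 2 * a ^ (d / 2) with hK_def
  have haK : (1 : ℝ) ≤ a ^ (d / 2) := by
    have := Real.rpow_le_rpow_of_exponent_le ha1 (by linarith : (0:ℝ) ≤ d / 2)
    simpa [Real.rpow_zero] using this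
  have hK2 : (2 : ℝ) ≤ K := by nlinarith
  have hK0 : (0 : ℝ) ≤ K := by linarith
  clear_value K
  -- continuity of ΛW
  have hΛWfun : ΛW = fun r : ℝ => ((d - 2) / d - r ^ 2 / (2 * d)) *
      (1 + r ^ 2 / a) ^ (-(d / 2)) := funext hΛW
  have hbase_pos : ∀ x : ℝ, (0 : ℝ) < 1 + x ^ 2 / a := by
    intro x; positivity
  have hcontΛW : Continuous ΛW := by
    rw [hΛWfun]
    apply Continuous.mul (by continuity)
    exact Continuous.rpow_const (by continuity) fun x => Or.inl (ne_of_gt (hbase_pos x))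
  -- decay bound
  have decay : ∀ x : ℝ, 0 < x → |ΛW x| ≤ K * x ^ ((2 : ℝ) - d) := by
    intro x hx
    rw [hΛW x]
    set p : ℝ := (d - 2) / d - x ^ 2 / (2 * d) with hp_def
    set b : ℝ := 1 + x ^ 2 / a with hb_def
    have hb1 : (1 : ℝ) ≤ b := by
      have : (0:ℝ) ≤ x ^ 2 / a := by positivity
      rw [hb_def]; linarith
    have hb0 : (0 : ℝ) < b := by linarith
    set q : ℝ := b ^ (-(d / 2)) with hq_def
    have hq0 : (0 : ℝ) ≤ q := Real.rpow_nonneg (by linarith) _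
    have habs : |p * q| = |p| * q := by
      rw [abs_mul, abs_of_nonneg hq0]
    have hp1 : (d - 2) / d ≤ 1 := by
      rw [div_le_one (by linarith)]; linarith
    have hp2 : (0 : ℝ) ≤ (d - 2) / d := div_nonneg (by linarith) (by linarith)
    have hp3 : x ^ 2 / (2 * d) ≤ x ^ 2 := div_le_self (sq_nonneg x) (by linarith)
    have hp4 : (0 : ℝ) ≤ x ^ 2 / (2 * d) := by positivity
    clear_value p
    have hp : |p| ≤ 1 + x ^ 2 := by
      rw [abs_le, hp_def]
      constructor
      · linarith [hp2, hp3, sq_nonneg x]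
      · linarith [hp1, hp4, sq_nonneg x]
    have hq_le_one : q ≤ 1 := Real.rpow_le_one_of_one_le_of_nonpos hb1 (by linarith)
    rw [habs]
    rcases le_or_gt x 1 with hx1 | hx1
    · -- small x
      have h1 : |p| * q ≤ (1 + x ^ 2) * 1 :=
        mul_le_mul hp hq_le_one hq0 (by positivity)
      have h2 : (1 : ℝ) ≤ x ^ ((2:ℝ) - d) :=
        Real.one_le_rpow_of_pos_of_le_one_of_nonpos hx hx1 (by linarith)
      have h3 : (1 + x ^ 2) * 1 ≤ 2 := by nlinarith
      calc |p| * q ≤ 2 := by linarith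
        _ ≤ K * 1 := by linarith
        _ ≤ K * x ^ ((2:ℝ) - d) := by
            apply mul_le_mul_of_nonneg_left h2 hK0
    · -- large x
      have hxa : (0 : ℝ) < x ^ 2 / a := by positivity
      have e3 : ((x : ℝ) ^ 2) ^ (-(d/2)) = x ^ (-d) := by
        rw [← Real.rpow_natCast x 2, ← Real.rpow_mul (le_of_lt hx)]
        norm_num
        congr 1 <;> try ring
      have hq_le : q ≤ a ^ (d / 2) * x ^ (-d) := by
        have hmono : (x ^ 2 / a) ^ (d / 2) ≤ b ^ (d / 2) :=
          Real.rpow_le_rpow (le_of_lt hxa) (by rw [hb_def]; linarith) (by linarith)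
        have hinv : b ^ (-(d/2)) ≤ (x ^ 2 / a) ^ (-(d/2)) := by
          rw [Real.rpow_neg (by linarith : (0:ℝ) ≤ b),
            Real.rpow_neg (le_of_lt hxa)]
          exact inv_anti₀ (Real.rpow_pos_of_pos hxa _) hmono
        have heq : (x ^ 2 / a) ^ (-(d/2)) = a ^ (d / 2) * x ^ (-d) := by
          rw [Real.div_rpow (sq_nonneg x) (le_of_lt ha0), e3,
            Real.rpow_neg (le_of_lt ha0), div_eq_mul_inv, inv_inv]
          exact mul_comm _ _
        calc q ≤ (x ^ 2 / a) ^ (-(d/2)) := hinv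
          _ = a ^ (d / 2) * x ^ (-d) := heq
      have hxd0 : (0:ℝ) ≤ x ^ (-d) := Real.rpow_nonneg (le_of_lt hx) _
      have hpx : |p| ≤ 2 * x ^ 2 := by nlinarith
      have step : |p| * q ≤ (2 * x ^ 2) * (a ^ (d / 2) * x ^ (-d)) := by
        exact mul_le_mul hpx hq_le hq0 (by positivity)
      have e4 : (x : ℝ) ^ 2 * x ^ (-d) = x ^ ((2:ℝ) - d) := by
        rw [← Real.rpow_natCast x 2, ← Real.rpow_add hx]
        norm_num
        congr 1 <;> try ring
      have heq2 : (2 * x ^ 2) * (a ^ (d / 2) * x ^ (-d)) = K * x ^ ((2:ℝ) - d) := by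
        calc (2 * x ^ 2) * (a ^ (d / 2) * x ^ (-d))
            = 2 * a ^ (d / 2) * (x ^ 2 * x ^ (-d)) := by ring
          _ = K * x ^ ((2:ℝ) - d) := by rw [e4, hK_def]
      linarith [step, heq2.le]
  -- integrability of the dominating function
  set h : ℝ → ℝ := fun r => K * |ΛW r| * r with hh_def
  have hconth : Continuous h := by
    apply Continuous.mul (continuous_const.mul hcontΛW.abs) continuous_id
  have hh_int : IntegrableOn h (Set.Ioi (0:ℝ)) := by
    rw [← Set.Ioc_union_Ioi_eq_Ioi (zero_le_one : (0:ℝ) ≤ 1)]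
    apply IntegrableOn.union
    · exact hconth.integrableOn_Ioc
    · apply Integrable.mono' (g := fun r => (K * K) * r ^ ((3:ℝ) - d))
        (((integrableOn_Ioi_rpow_of_lt (by linarith : (3:ℝ) - d < -1) one_pos).const_mul (K * K)))
        hconth.aestronglyMeasurable.restrict
      rw [ae_restrict_iff' measurableSet_Ioi]
      apply ae_of_all
      intro r hr
      have hr1 : (1:ℝ) < r := hr
      have hr0 : (0:ℝ) < r := by linarith
      have hΛr : |ΛW r| ≤ K * r ^ ((2:ℝ) - d) := decay r hr0
      have hnn : (0:ℝ) ≤ h r := by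
        simp only [hh_def]; positivity
      rw [Real.norm_eq_abs, abs_of_nonneg hnn]
      have : K * |ΛW r| * r ≤ K * (K * r ^ ((2:ℝ) - d)) * r := by
        apply mul_le_mul_of_nonneg_right _ (le_of_lt hr0)
        exact mul_le_mul_of_nonneg_left hΛr hK0
      calc h r ≤ K * (K * r ^ ((2:ℝ) - d)) * r := this
        _ = (K * K) * (r ^ ((2:ℝ) - d) * r ^ (1:ℝ)) := by rw [Real.rpow_one]; ring
        _ = (K * K) * r ^ ((3:ℝ) - d) := by
            rw [← Real.rpow_add hr0]
            have h31 : (2:ℝ) - d + 1 = 3 - d := by ring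
            rw [h31]
  refine ⟨∫ r in Set.Ioi (0:ℝ), h r, ?_⟩
  rintro σ ⟨hσ0, hσ1⟩
  set e : ℝ := (d - 4) / 2 with he_def
  -- pointwise bound
  have key : ∀ r ∈ Set.Ioi (0:ℝ),
      ‖σ ^ (-(d / 2)) * ΛW (r / σ) * ΛW r * r ^ (D - 1)‖ ≤ σ ^ e * h r := by
    intro r hr
    have hr0 : (0:ℝ) < r := hr
    have hrs : (0:ℝ) < r / σ := div_pos hr0 hσ0
    have hσe : (0:ℝ) ≤ σ ^ (-(d / 2)) := Real.rpow_nonneg (le_of_lt hσ0) _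
    have hrp : (0:ℝ) ≤ (r:ℝ) ^ (D - 1) := pow_nonneg (le_of_lt hr0) _
    have habs : ‖σ ^ (-(d / 2)) * ΛW (r / σ) * ΛW r * r ^ (D - 1)‖
        = σ ^ (-(d / 2)) * |ΛW (r / σ)| * |ΛW r| * r ^ (D - 1) := by
      rw [Real.norm_eq_abs, abs_mul, abs_mul, abs_mul,
        abs_of_nonneg hσe, abs_of_nonneg hrp]
    rw [habs]
    have hdecay := decay (r / σ) hrs
    have step : σ ^ (-(d / 2)) * |ΛW (r / σ)| * |ΛW r| * r ^ (D - 1)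
        ≤ σ ^ (-(d / 2)) * (K * (r / σ) ^ ((2:ℝ) - d)) * |ΛW r| * r ^ (D - 1) := by
      gcongr
    have hcast : (r:ℝ) ^ (D - 1) = r ^ ((d:ℝ) - 1) := by
      rw [← Real.rpow_natCast r (D - 1)]
      congr 1
      have : ((D - 1 : ℕ) : ℝ) = d - 1 := by
        have h1 : (1:ℕ) ≤ D := by omega
        push_cast [Nat.cast_sub h1]
        simp [hd_def]
      rw [this]
    have heq : σ ^ (-(d / 2)) * (K * (r / σ) ^ ((2:ℝ) - d)) * |ΛW r| * r ^ (D - 1)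
        = σ ^ e * h r := by
      rw [hcast, Real.div_rpow (le_of_lt hr0) (le_of_lt hσ0)]
      simp only [hh_def]
      have e1 : σ ^ (-(d / 2)) / σ ^ ((2:ℝ) - d) = σ ^ e := by
        rw [← Real.rpow_sub hσ0]; congr 1; rw [he_def]; ring
      have e2 : r ^ ((2:ℝ) - d) * r ^ (d - 1) = r := by
        rw [← Real.rpow_add hr0]
        have h21 : (2:ℝ) - d + (d - 1) = 1 := by ring
        rw [h21, Real.rpow_one]
      calc σ ^ (-(d / 2)) * (K * (r ^ ((2:ℝ) - d) / σ ^ ((2:ℝ) - d))) * |ΛW r| * r ^ (d - 1)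
          = (σ ^ (-(d / 2)) / σ ^ ((2:ℝ) - d)) * K * (r ^ ((2:ℝ) - d) * r ^ (d - 1)) * |ΛW r| := by
            ring
        _ = σ ^ e * K * r * |ΛW r| := by rw [e1, e2]
        _ = σ ^ e * (K * |ΛW r| * r) := by ring
    calc σ ^ (-(d / 2)) * |ΛW (r / σ)| * |ΛW r| * r ^ (D - 1)
        ≤ σ ^ (-(d / 2)) * (K * (r / σ) ^ ((2:ℝ) - d)) * |ΛW r| * r ^ (D - 1) := step
      _ = σ ^ e * h r := heq
  have hg_int : Integrable (fun r => σ ^ e * h r) (volume.restrict (Set.Ioi (0:ℝ))) :=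
    hh_int.const_mul _
  have hbound : ‖∫ r in Set.Ioi (0:ℝ), σ ^ (-(d / 2)) * ΛW (r / σ) * ΛW r * r ^ (D - 1)‖
      ≤ ∫ r in Set.Ioi (0:ℝ), σ ^ e * h r := by
    apply norm_integral_le_of_norm_le hg_int
    rw [ae_restrict_iff' measurableSet_Ioi]
    exact ae_of_all _ key
  rw [Real.norm_eq_abs] at hbound
  calc |∫ r in Set.Ioi (0:ℝ), σ ^ (-(d / 2)) * ΛW (r / σ) * ΛW r * r ^ (D - 1)|
      ≤ ∫ r in Set.Ioi (0:ℝ), σ ^ e * h r := hbound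
    _ = σ ^ e * ∫ r in Set.Ioi (0:ℝ), h r := integral_const_mul _ _
    _ = (∫ r in Set.Ioi (0:ℝ), h r) * σ ^ e := mul_comm _ _
end

section
/- Let a < b be real numbers and μ : [a,b] → (0,∞) a function with Lipschitz constant ≤ 1, and assume b - a ≥ μ(a)/4. Then there exist l ≥ 0 and points a = a₀ < a₁ < ⋯ < a_l < a_{l+1} = b such that for every i ∈ {0, 1, …, l}: (1/4) μ(a_i) ≤ a_{i+1} - a_i ≤ (3/4) μ(a_i). -/
theorem stmt12 (a b : ℝ) (hab : a < b) (μ : ℝ → ℝ)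
    (hpos : ∀ t ∈ Set.Icc a b, 0 < μ t)
    (hlip : LipschitzOnWith 1 μ (Set.Icc a b))
    (hlen : μ a / 4 ≤ b - a) :
    ∃ (l : ℕ) (c : ℕ → ℝ), c 0 = a ∧ c (l + 1) = b ∧
      (∀ i ≤ l, c i < c (i + 1)) ∧
      ∀ i ≤ l, μ (c i) / 4 ≤ c (i + 1) - c i ∧ c (i + 1) - c i ≤ 3 / 4 * μ (c i) := by
  obtain ⟨t₀, ht₀, hmin⟩ := (isCompact_Icc (a := a) (b := b)).exists_isMinOn
    (Set.nonempty_Icc.2 hab.le) hlip.continuousOn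
  set ε := μ t₀ with hε
  have hεpos : 0 < ε := hpos t₀ ht₀
  have key : ∀ n : ℕ, ∀ x ∈ Set.Icc a b, μ x / 4 ≤ b - x → b - x ≤ n * (ε / 4) →
      ∃ (l : ℕ) (c : ℕ → ℝ), c 0 = x ∧ c (l + 1) = b ∧
        (∀ i ≤ l, c i < c (i + 1)) ∧
        ∀ i ≤ l, μ (c i) / 4 ≤ c (i + 1) - c i ∧ c (i + 1) - c i ≤ 3 / 4 * μ (c i) := by
    intro n
    induction n with
    | zero =>
      intro x hx h1 h2
      exfalso
      have := hpos x hx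
      simp only [Nat.cast_zero, zero_mul] at h2
      linarith
    | succ n ih =>
      intro x hx h1 h2
      have hμx := hpos x hx
      by_cases hc : b - x ≤ 3 / 4 * μ x
      · refine ⟨0, fun i => if i = 0 then x else b, by simp, by simp, ?_, ?_⟩
        · intro i hi
          interval_cases i
          simp
          linarith
        · intro i hi
          interval_cases i
          simp
          exact ⟨h1, by linarith⟩
      · push_neg at hc
        set x' := x + μ x / 4 with hx'def
        have hεx : ε ≤ μ x := hmin hx
        have hx'mem : x' ∈ Set.Icc a b := ⟨by simp [hx'def]; linarith [hx.1], by
          simp [hx'def]; linarith⟩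
        have hlipx : |μ x' - μ x| ≤ μ x / 4 := by
          have := hlip.dist_le_mul x' hx'mem x hx
          rw [Real.dist_eq, Real.dist_eq] at this
          have h4 : |x' - x| = μ x / 4 := by
            rw [hx'def, add_sub_cancel_left, abs_of_nonneg (by linarith)]
          simpa [h4] using this
        have habs := abs_le.mp hlipx
        have h1' : μ x' / 4 ≤ b - x' := by
          simp only [hx'def]
          linarith [habs.2]
        have h2' : b - x' ≤ n * (ε / 4) := by
          have : b - x' = b - x - μ x / 4 := by rw [hx'def]; ring
          rw [this]
          push_cast at h2 ⊢
          linarith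
        obtain ⟨l, c, hc0, hcl, hmono, hbound⟩ := ih x' hx'mem h1' h2'
        refine ⟨l + 1, fun i => if i = 0 then x else c (i - 1), by simp, ?_, ?_, ?_⟩
        · simpa using hcl
        · intro i hi
          match i with
          | 0 => simp [hc0, hx'def]; linarith
          | j + 1 =>
            have hj : j ≤ l := by omega
            simpa using hmono j hj
        · intro i hi
          match i with
          | 0 =>
            simp [hc0, hx'def]
            linarith
          | j + 1 =>
            have hj : j ≤ l := by omega
            simpa using hbound j hj
  have hn : b - a ≤ (⌈(b - a) / (ε / 4)⌉₊ : ℝ) * (ε / 4) := by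
    rw [← div_le_iff₀ (by positivity)]
    exact Nat.le_ceil _
  exact key _ a ⟨le_refl a, hab.le⟩ hlen hn
end
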